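/- arXiv:math/0003020 — 4 statements merged into one kernel-verified Lean document; each statement's English description precedes it below -/
import Mathlib

section
/- Let X and Y be real Banach spaces, k ≥ 1 an integer, P : X → Y a continuous k-homogeneous polynomial, and ∑ xₙ a weakly unconditionally Cauchy series in X. Then the sequence (P(∑_{i=1}^n x_i))ₙ is weakly Cauchy in Y: for every continuous linear functional ψ ∈ Y*, the scalar sequence (ψ(P(∑_{i=1}^n x_i)))ₙ converges. -/
open Filter Topology Metric

noncomputable section

/-- The Banach space `c₀` of real sequences converging to zero, with the sup norm. -/
abbrev c0 : Type := ZeroAtInftyContinuousMap ℕ ℝ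

/-- The unit vector basis of `c₀`. -/
def e (n : ℕ) : c0 :=
  { toFun := fun i => if i = n then (1 : ℝ) else 0
    continuous_toFun := continuous_of_discreteTopology
    zero_at_infty' := by
      rw [Filter.cocompact_eq_cofinite]
      refine tendsto_const_nhds.congr' ?_
      have h : {n}ᶜ ∈ (Filter.cofinite : Filter ℕ) := by simp [Filter.cofinite]
      filter_upwards [h] with i hi
      simp only [Set.mem_compl_iff, Set.mem_singleton_iff] at hi
      simp [hi] }

/-- A series `∑ xₙ` is weakly unconditionally Cauchy (w.u.C.) if `∑ |φ (xₙ)| < ∞` for every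
continuous linear functional `φ`. -/
def WUC {X : Type*} [NormedAddCommGroup X] [NormedSpace ℝ X] (x : ℕ → X) : Prop :=
  ∀ φ : X →L[ℝ] ℝ, Summable fun n => |φ (x n)|

/-- A sequence is equivalent to the unit vector basis of `c₀`: there are `0 < c ≤ C` with
`c · maxᵢ |aᵢ| ≤ ‖∑ aᵢ xᵢ‖ ≤ C · maxᵢ |aᵢ|` for all finite scalar families. -/
def IsEquivC0Basis {X : Type*} [NormedAddCommGroup X] [NormedSpace ℝ X] (x : ℕ → X) : Prop :=
  ∃ c C : ℝ, 0 < c ∧ c ≤ C ∧ ∀ (n : ℕ) (a : ℕ → ℝ),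
    c * (⨆ i : Fin n, |a i|) ≤ ‖∑ i ∈ Finset.range n, a i • x i‖ ∧
    ‖∑ i ∈ Finset.range n, a i • x i‖ ≤ C * (⨆ i : Fin n, |a i|)

/-- A map (polynomial) is unconditionally converging if for every w.u.C. series `∑ xₙ` the
sequence of values at the partial sums converges in norm. -/
def UCPoly {X Y : Type*} [NormedAddCommGroup X] [NormedSpace ℝ X]
    [NormedAddCommGroup Y] [NormedSpace ℝ Y] (P : X → Y) : Prop :=
  ∀ x : ℕ → X, WUC x →
    ∃ L : Y, Tendsto (fun n => P (∑ i ∈ Finset.range n, x i)) atTop (𝓝 L)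

/-- An operator is unconditionally converging if it maps w.u.C. series to unconditionally
convergent series. -/
def UCOp {X Y : Type*} [NormedAddCommGroup X] [NormedSpace ℝ X]
    [NormedAddCommGroup Y] [NormedSpace ℝ Y] (T : X → Y) : Prop :=
  ∀ x : ℕ → X, WUC x → Summable fun n => T (x n)

/-- A map (polynomial or operator) is compact if the image of the closed unit ball is
relatively norm compact. -/
def CompactMap {X Y : Type*} [NormedAddCommGroup X] [NormedSpace ℝ X]
    [NormedAddCommGroup Y] [NormedSpace ℝ Y] (P : X → Y) : Prop :=
  IsCompact (closure (P '' Metric.closedBall 0 1))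

/-- A set is relatively weakly compact if its closure in the weak topology is compact. -/
def RelWeakCompact {Y : Type*} [NormedAddCommGroup Y] [NormedSpace ℝ Y] (s : Set Y) : Prop :=
  IsCompact (closure ((toWeakSpace ℝ Y) '' s))

/-- A WUC-set is the image of the closed unit ball of `c₀` under a bounded operator. -/
def IsWUCSet {X : Type*} [NormedAddCommGroup X] [NormedSpace ℝ X] (s : Set X) : Prop :=
  ∃ T : c0 →L[ℝ] X, s = ⇑T '' Metric.closedBall 0 1

/-!
Induction on `k`, for scalar forms `B`. With `sₙ = ∑_{i<n} xᵢ` and `Φₙ = B (sₙ, …, sₙ, ·) ∈ X*`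
we have `B (sₙ, …, sₙ) = ∑_{j<n} Φₙ xⱼ`, and the induction hypothesis applied to `E ∘ B.curryRight`
(`E ∈ X**`) says that `(Φₙ)` is weakly Cauchy in `X*`. As `∑ xⱼ` is w.u.C., Banach–Steinhaus makes
`φ ↦ (φ xⱼ)ⱼ` a bounded operator `X* → ℓ¹`, and every bounded `b` gives a functional
`φ ↦ ∑ bⱼ φ xⱼ` in `X**`; so the rows `(Φₙ xⱼ)ⱼ` are weakly Cauchy in `ℓ¹`. By Schur's gliding hump
argument they converge in `ℓ¹` to some `v`, whence `∑_{j<n} Φₙ xⱼ → ∑ⱼ vⱼ`.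
-/

open Finset

theorem abs_mul_le_of_abs_le_one {b : ℝ} (hb : |b| ≤ 1) (g : ℝ) : |b * g| ≤ |g| := by
  rw [abs_mul]; exact mul_le_of_le_one_left (abs_nonneg _) hb

theorem summable_mul_of_abs_le_one {b g : ℕ → ℝ} (hb : ∀ j, |b j| ≤ 1)
    (hg : Summable fun j => |g j|) : Summable fun j => b j * g j :=
  .of_norm_bounded hg fun j => abs_mul_le_of_abs_le_one (hb j) (g j)

section Schur

theorem sub_le_tsum_mul_of_eq_abs_on_Ico {g b : ℕ → ℝ} (hg : Summable fun j => |g j|)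
    (hb : ∀ j, |b j| ≤ 1) {K K' : ℕ} (hKK' : K ≤ K') (hsign : ∀ j ∈ Ico K K', b j * g j = |g j|) :
    ∑' j, |g j| - 2 * (∑ j ∈ range K, |g j| + ∑' j, |g (j + K')|) ≤ ∑' j, b j * g j := by
  set c : ℕ → ℝ := fun j => |g j| - b j * g j
  have hc2 : ∀ j, c j ≤ 2 * |g j| := fun j => by
    linarith [neg_abs_le (b j * g j), abs_mul_le_of_abs_le_one (hb j) (g j)]
  have hcs : Summable c := hg.sub (summable_mul_of_abs_le_one hb hg)
  have hcK : ∑ j ∈ Ico K K', c j = 0 := sum_eq_zero fun j hj => sub_eq_zero.2 (hsign j hj).symm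
  have hc : ∑' j, c j ≤ 2 * (∑ j ∈ range K, |g j| + ∑' j, |g (j + K')|) := by
    rw [← hcs.sum_add_tsum_nat_add K', ← sum_range_add_sum_Ico _ hKK', hcK, add_zero, mul_add,
      mul_sum, ← tsum_mul_left]
    gcongr with j
    · exact hc2 j
    · exact (summable_nat_add_iff K').2 hcs
    · exact ((summable_nat_add_iff K').2 hg).mul_left 2
    · exact hc2 _
  rw [hg.tsum_sub (summable_mul_of_abs_le_one hb hg)] at hc
  linarith

theorem StrictMono.findGreatest_eq {h : ℕ → ℕ} (hh : StrictMono h) {a j : ℕ} (h₁ : h a ≤ j)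
    (h₂ : j < h (a + 1)) : Nat.findGreatest (fun a => h a ≤ j) j = a := by
  have haj : a ≤ j := hh.le_apply.trans h₁
  refine le_antisymm ?_ (Nat.le_findGreatest haj h₁)
  by_contra! hlt
  have := Nat.findGreatest_spec (P := fun a => h a ≤ j) haj h₁
  exact absurd (h₂.trans_le (hh.monotone hlt)) this.not_gt

variable {f : ℕ → ℕ → ℝ}

theorem exists_hump (hcoord : ∀ j, Tendsto (fun l => f l j) atTop (𝓝 0)) {ε δ : ℝ} (hδ : 0 < δ)
    (hbig : ∀ a, ∃ l, a ≤ l ∧ ε ≤ ∑' j, |f l j|) (a K : ℕ) :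
    ∃ l K', a ≤ l ∧ K < K' ∧ ε ≤ ∑' j, |f l j| ∧ ∑ j ∈ range K, |f l j| < δ ∧
      ∑' j, |f l (j + K')| < δ := by
  have hhead : Tendsto (fun l => ∑ j ∈ range K, |f l j|) atTop (𝓝 0) := by
    simpa using tendsto_finsetSum (range K) fun j _ => (hcoord j).abs
  obtain ⟨N, hN⟩ := eventually_atTop.1 ((tendsto_order.1 hhead).2 δ hδ)
  obtain ⟨l, hl, hlε⟩ := hbig (max a N)
  obtain ⟨M, hM⟩ := eventually_atTop.1
    ((tendsto_order.1 (tendsto_sum_nat_add fun j => |f l j|)).2 δ hδ)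
  exact ⟨l, max M (K + 1), le_of_max_le_left hl, by omega, hlε, hN l (le_of_max_le_right hl),
    hM _ (le_max_left _ _)⟩

theorem exists_not_tendsto_of_humps (hsf : ∀ l, Summable fun j => |f l j|) {ε : ℝ} (hε : 0 < ε)
    {l h : ℕ → ℕ} (hh : StrictMono h) (hmass : ∀ a, ε ≤ ∑' j, |f (l a) j|)
    (hhead : ∀ a, ∑ j ∈ range (h a), |f (l a) j| < ε / 8)
    (htail : ∀ a, ∑' j, |f (l a) (j + h (a + 1))| < ε / 8) :
    ∃ b : ℕ → ℝ, (∀ j, |b j| ≤ 1) ∧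
      ∀ L, ¬ Tendsto (fun a => ∑' j, b j * f (l a) j) atTop (𝓝 L) := by
  -- on the `a`-th block `[h a, h (a+1))`, `b` is the sign of `(-1)^a * f (l a)`
  set blk : ℕ → ℕ := fun j => Nat.findGreatest (fun a => h a ≤ j) j
  have hsign_le : ∀ t : ℝ, |(SignType.sign t : ℝ)| ≤ 1 := fun t => by
    rcases SignType.sign t with _ | _ | _ <;> simp
  set b : ℕ → ℝ := fun j => (-1) ^ blk j * SignType.sign (f (l (blk j)) j)
  have hb : ∀ j, |b j| ≤ 1 := fun j => by simpa [b, abs_mul] using hsign_le _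
  refine ⟨b, hb, fun L hL => ?_⟩
  set u : ℕ → ℝ := fun a => ∑' j, b j * f (l a) j
  have hu : ∀ a, ε / 2 ≤ (-1) ^ a * u a := fun a => by
    have hba : ∀ j, |(-1) ^ a * b j| ≤ 1 := fun j => by simpa [abs_mul] using hb j
    have := sub_le_tsum_mul_of_eq_abs_on_Ico (hsf (l a)) hba (hh.monotone a.le_succ)
      fun j hj => by
        obtain ⟨hj₁, hj₂⟩ := mem_Ico.1 hj
        have hblk : blk j = a := hh.findGreatest_eq hj₁ hj₂
        simp only [b, hblk, ← mul_assoc, ← pow_add, ← two_mul, pow_mul, neg_one_sq, one_pow,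
          one_mul, sign_mul_self]
    simp only [mul_assoc, tsum_mul_left] at this
    linarith [hmass a, hhead a, htail a]
  -- consecutive `u a` have opposite signs and size at least `ε / 2`
  have hdiff : Tendsto (fun a => u (a + 1) - u a) atTop (𝓝 0) := by
    simpa using (hL.comp (tendsto_add_atTop_nat 1)).sub hL
  obtain ⟨a, ha⟩ := ((tendsto_order.1 hdiff.abs).2 ε (by rwa [abs_zero])).exists
  have h1 := hu a
  have h2 := hu (a + 1)
  rw [pow_succ] at h2
  rcases neg_one_pow_eq_or ℝ a with hpow | hpow <;> rw [hpow] at h1 h2 <;>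
    linarith [le_abs_self (u (a + 1) - u a), neg_abs_le (u (a + 1) - u a)]

theorem tendsto_tsum_abs_zero_of_forall_tendsto (hsf : ∀ l, Summable fun j => |f l j|)
    (hcoord : ∀ j, Tendsto (fun l => f l j) atTop (𝓝 0))
    (hweak : ∀ b : ℕ → ℝ, (∀ j, |b j| ≤ 1) →
      ∃ L, Tendsto (fun l => ∑' j, b j * f l j) atTop (𝓝 L)) :
    Tendsto (fun l => ∑' j, |f l j|) atTop (𝓝 0) := by
  refine tendsto_order.2 ⟨fun c hc => .of_forall fun l => hc.trans_le
    (tsum_nonneg fun _ => abs_nonneg _), fun ε hε => ?_⟩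
  by_contra hfreq
  simp only [not_eventually, not_lt, frequently_atTop] at hfreq
  choose l K' hl hKK' hmass hhead htail using
    exists_hump hcoord (by positivity : 0 < ε / 8) hfreq
  -- the hump `l a` is chosen after the block start `h a`, and fixes the block end `h (a + 1)`
  let h : ℕ → ℕ := fun a => Nat.rec 0 (fun a K => K' a K) a
  obtain ⟨b, hb, hnot⟩ := exists_not_tendsto_of_humps hsf hε (l := fun a => l a (h a)) (h := h)
    (strictMono_nat_of_lt_succ fun a => hKK' a (h a)) (fun a => hmass a (h a))
    (fun a => hhead a (h a)) (fun a => htail a (h a))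
  obtain ⟨L, hL⟩ := hweak b hb
  exact hnot L (hL.comp (tendsto_atTop_mono (fun a => hl a (h a)) tendsto_id))

end Schur

section L1Convergence

variable {w : ℕ → ℕ → ℝ} {v : ℕ → ℝ}

theorem summable_abs_of_tendsto_of_tsum_abs_le (hw : ∀ n, Summable fun j => |w n j|) {M : ℝ}
    (hM : ∀ n, ∑' j, |w n j| ≤ M) (hv : ∀ j, Tendsto (fun n => w n j) atTop (𝓝 (v j))) :
    Summable fun j => |v j| :=
  summable_of_sum_range_le (fun _ => abs_nonneg _) fun _ =>
    le_of_tendsto' (tendsto_finsetSum _ fun j _ => (hv j).abs) fun n =>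
      ((hw n).sum_le_tsum _ fun _ _ => abs_nonneg _).trans (hM n)

theorem tendsto_tsum_abs_sub_of_forall_tendsto (hw : ∀ n, Summable fun j => |w n j|)
    (hv : Summable fun j => |v j|) (hcoord : ∀ j, Tendsto (fun n => w n j) atTop (𝓝 (v j)))
    (hweak : ∀ b : ℕ → ℝ, (∀ j, |b j| ≤ 1) →
      ∃ L, Tendsto (fun n => ∑' j, b j * w n j) atTop (𝓝 L)) :
    Tendsto (fun n => ∑' j, |w n j - v j|) atTop (𝓝 0) := by
  refine tendsto_tsum_abs_zero_of_forall_tendsto (fun n => ((hw n).of_abs.sub hv.of_abs).abs)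
    (fun j => by simpa using (hcoord j).sub_const (v j)) fun b hb => ?_
  obtain ⟨L, hL⟩ := hweak b hb
  refine ⟨L - ∑' j, b j * v j, (hL.sub_const _).congr fun n => ?_⟩
  rw [← (summable_mul_of_abs_le_one hb (hw n)).tsum_sub (summable_mul_of_abs_le_one hb hv)]
  simp only [mul_sub]

theorem tendsto_sum_range_of_tendsto_tsum_abs_sub (hw : ∀ n, Summable fun j => |w n j|)
    (hv : Summable fun j => |v j|) (h : Tendsto (fun n => ∑' j, |w n j - v j|) atTop (𝓝 0)) :
    Tendsto (fun n => ∑ j ∈ range n, w n j) atTop (𝓝 (∑' j, v j)) := by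
  have herr : Tendsto (fun n => ∑ j ∈ range n, (w n j - v j)) atTop (𝓝 0) :=
    squeeze_zero_norm (fun n => (abs_sum_le_sum_abs _ _).trans
      ((((hw n).of_abs.sub hv.of_abs).abs).sum_le_tsum _ fun _ _ => abs_nonneg _)) h
  simpa [sum_sub_distrib] using herr.add hv.of_abs.hasSum.tendsto_sum_nat

end L1Convergence

section WeaklyBounded

variable {V : Type*} [NormedAddCommGroup V] [NormedSpace ℝ V]

theorem exists_norm_le_of_forall_abs_le {ι : Type*} (v : ι → V)
    (hv : ∀ f : StrongDual ℝ V, ∃ C, ∀ i, |f (v i)| ≤ C) : ∃ M, ∀ i, ‖v i‖ ≤ M := by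
  let ι₂ := NormedSpace.inclusionInDoubleDualLi (E := V) ℝ
  obtain ⟨M, hM⟩ := banach_steinhaus (g := fun i => ι₂ (v i)) hv
  exact ⟨M, fun i => (ι₂.norm_map (v i)).symm.trans_le (hM i)⟩

theorem exists_norm_le_of_forall_tendsto (v : ℕ → V)
    (hv : ∀ f : StrongDual ℝ V, ∃ L, Tendsto (fun n => f (v n)) atTop (𝓝 L)) :
    ∃ M, ∀ n, ‖v n‖ ≤ M :=
  exists_norm_le_of_forall_abs_le v fun f =>
    let ⟨_, hL⟩ := hv f
    let ⟨C, hC⟩ := hL.abs.bddAbove_range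
    ⟨C, fun n => hC ⟨n, rfl⟩⟩

end WeaklyBounded

section WUC

variable {X : Type*} [NormedAddCommGroup X] [NormedSpace ℝ X] {x : ℕ → X}

theorem WUC.exists_norm_sum_le (hx : WUC x) : ∃ M, ∀ s : Finset ℕ, ‖∑ i ∈ s, x i‖ ≤ M :=
  exists_norm_le_of_forall_abs_le _ fun f => ⟨∑' j, |f (x j)|, fun s => by
    rw [map_sum]
    exact (abs_sum_le_sum_abs _ _).trans ((hx f).sum_le_tsum s fun _ _ => abs_nonneg _)⟩

theorem WUC.exists_tsum_abs_le (hx : WUC x) :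
    ∃ C, 0 ≤ C ∧ ∀ f : StrongDual ℝ X, ∑' j, |f (x j)| ≤ C * ‖f‖ := by
  obtain ⟨M, hM⟩ := hx.exists_norm_sum_le
  have hM0 : 0 ≤ M := by simpa using hM ∅
  refine ⟨2 * M, by positivity, fun f => Real.tsum_le_of_sum_range_le (fun _ => abs_nonneg _)
    fun n => ?_⟩
  set p : ℕ → Prop := fun j => 0 ≤ f (x j)
  calc ∑ j ∈ range n, |f (x j)|
      = f (∑ j ∈ (range n).filter p, x j) - f (∑ j ∈ (range n).filter (¬ p ·), x j) := by
        rw [map_sum, map_sum, ← sum_filter_add_sum_filter_not (range n) p, sub_eq_add_neg,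
          ← sum_neg_distrib]
        congr 1 <;> refine sum_congr rfl fun j hj => ?_ <;> simp only [mem_filter, p] at hj
        · exact abs_of_nonneg hj.2
        · exact abs_of_neg (not_le.1 hj.2)
    _ ≤ M * ‖f‖ + M * ‖f‖ := by
        refine (le_abs_self _).trans ((abs_sub _ _).trans (add_le_add ?_ ?_)) <;>
          exact (f.le_opNorm _).trans (by rw [mul_comm]; gcongr; exact hM _)
    _ = 2 * M * ‖f‖ := by ring

theorem WUC.exists_bidual_eq_tsum (hx : WUC x) (b : ℕ → ℝ) (hb : ∀ j, |b j| ≤ 1) :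
    ∃ E : StrongDual ℝ (StrongDual ℝ X), ∀ f, E f = ∑' j, b j * f (x j) := by
  obtain ⟨C, -, hC⟩ := hx.exists_tsum_abs_le
  have hs : ∀ f : StrongDual ℝ X, Summable fun j => b j * f (x j) :=
    fun f => summable_mul_of_abs_le_one hb (hx f)
  let E : StrongDual ℝ X →ₗ[ℝ] ℝ :=
    { toFun := fun f => ∑' j, b j * f (x j)
      map_add' := fun f g => by simp only [add_apply, mul_add, (hs f).tsum_add (hs g)]
      map_smul' := fun c f => by
        simp only [smul_apply, smul_eq_mul, mul_left_comm, tsum_mul_left,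
          RingHom.id_apply] }
  refine ⟨E.mkContinuous C fun f => ?_, fun f => rfl⟩
  exact (norm_tsum_le_tsum_norm (hs f).norm).trans <|
    ((hs f).norm.tsum_le_tsum (fun j => abs_mul_le_of_abs_le_one (hb j) _) (hx f)).trans (hC f)

theorem WUC.exists_tendsto_apply_sum_range (hx : WUC x) {Φ : ℕ → StrongDual ℝ X}
    (hΦ : ∀ E : StrongDual ℝ (StrongDual ℝ X), ∃ L, Tendsto (fun n => E (Φ n)) atTop (𝓝 L)) :
    ∃ L, Tendsto (fun n => Φ n (∑ i ∈ range n, x i)) atTop (𝓝 L) := by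
  obtain ⟨C, hC0, hC⟩ := hx.exists_tsum_abs_le
  obtain ⟨M, hM⟩ := exists_norm_le_of_forall_tendsto Φ hΦ
  choose v hv using fun j => hΦ (NormedSpace.inclusionInDoubleDual ℝ X (x j))
  simp only [NormedSpace.dual_def] at hv
  have hrow : ∀ n, Summable fun j => |Φ n (x j)| := fun n => hx (Φ n)
  have hv_sum : Summable fun j => |v j| :=
    summable_abs_of_tendsto_of_tsum_abs_le hrow (M := C * M)
      (fun n => (hC _).trans (by gcongr; exact hM n)) hv
  have hweak : ∀ b : ℕ → ℝ, (∀ j, |b j| ≤ 1) →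
      ∃ L, Tendsto (fun n => ∑' j, b j * Φ n (x j)) atTop (𝓝 L) := fun b hb => by
    obtain ⟨E, hE⟩ := hx.exists_bidual_eq_tsum b hb
    simpa only [hE] using hΦ E
  simp only [map_sum]
  exact ⟨_, tendsto_sum_range_of_tendsto_tsum_abs_sub hrow hv_sum
    (tendsto_tsum_abs_sub_of_forall_tendsto hrow hv_sum hv hweak)⟩

theorem WUC.exists_tendsto_multilinear_sum_range (hx : WUC x) :
    ∀ (k : ℕ) (B : ContinuousMultilinearMap ℝ (fun _ : Fin k => X) ℝ),
      ∃ L, Tendsto (fun n => B fun _ => ∑ i ∈ range n, x i) atTop (𝓝 L)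
  | 0, B => ⟨B 0, tendsto_const_nhds.congr fun _ => congrArg B (Subsingleton.elim _ _)⟩
  | k + 1, B => by
    have key := hx.exists_tendsto_apply_sum_range
      (Φ := fun n => B.curryRight fun _ => ∑ i ∈ range n, x i)
      fun E => hx.exists_tendsto_multilinear_sum_range k
        (E.compContinuousMultilinearMap B.curryRight)
    have hsnoc : ∀ s : X, Fin.snoc (fun _ : Fin k => s) s = fun _ => s :=
      fun s => Fin.snoc_init_self fun _ => s
    simpa only [ContinuousMultilinearMap.curryRight_apply, hsnoc] using key

end WUC

theorem partial_sums_weakly_cauchy_general {X Y : Type*}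
    [NormedAddCommGroup X] [NormedSpace ℝ X]
    [NormedAddCommGroup Y] [NormedSpace ℝ Y]
    (k : ℕ) (A : ContinuousMultilinearMap ℝ (fun _ : Fin k => X) Y)
    (x : ℕ → X) (hx : WUC x) :
    ∀ ψ : Y →L[ℝ] ℝ, ∃ L : ℝ,
      Tendsto (fun n => ψ (A fun _ => ∑ i ∈ Finset.range n, x i)) atTop (𝓝 L) := fun ψ =>
  hx.exists_tendsto_multilinear_sum_range k (ψ.compContinuousMultilinearMap A)

/-- For every w.u.C. series `∑ xₙ`, the sequence `(P (∑_{i<n} xᵢ))ₙ` is weakly Cauchy. -/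
theorem partial_sums_weakly_cauchy {X Y : Type*}
    [NormedAddCommGroup X] [NormedSpace ℝ X] [CompleteSpace X]
    [NormedAddCommGroup Y] [NormedSpace ℝ Y] [CompleteSpace Y]
    (k : ℕ) (hk : 1 ≤ k) (A : ContinuousMultilinearMap ℝ (fun _ : Fin k => X) Y)
    (x : ℕ → X) (hx : WUC x) :
    ∀ ψ : Y →L[ℝ] ℝ, ∃ L : ℝ,
      Tendsto (fun n => ψ (A fun _ => ∑ i ∈ Finset.range n, x i)) atTop (𝓝 L) :=
  partial_sums_weakly_cauchy_general k A x hx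
end
end

section
/- Let X and Y be real Banach spaces, k ≥ 1 an integer and P : X → Y a continuous k-homogeneous polynomial which is not unconditionally converging. Then there exists a bounded linear operator T : c₀ → X such that the polynomial P∘T : c₀ → Y is not unconditionally converging. -/
open Filter Topology Metric

noncomputable section

/-! ### Auxiliary lemmas -/

lemma c0_coe_abs_le_norm (f : c0) (i : ℕ) : |f i| ≤ ‖f‖ := by
  rw [← ZeroAtInftyContinuousMap.norm_toBCF_eq_norm]
  simpa using BoundedContinuousFunction.norm_coe_le_norm f.toBCF i

lemma c0_norm_le {f : c0} {C : ℝ} (hC : 0 ≤ C) (h : ∀ i, |f i| ≤ C) : ‖f‖ ≤ C := by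
  rw [← ZeroAtInftyContinuousMap.norm_toBCF_eq_norm]
  exact (BoundedContinuousFunction.norm_le hC).mpr fun i => by simpa using h i

lemma c0_sum_apply (s : Finset ℕ) (g : ℕ → c0) (j : ℕ) :
    (∑ i ∈ s, g i) j = ∑ i ∈ s, g i j := by
  classical
  induction s using Finset.cons_induction with
  | empty => simp
  | cons a s ha ih =>
    rw [Finset.sum_cons, Finset.sum_cons, ZeroAtInftyContinuousMap.coe_add,
      Pi.add_apply, ih]

lemma e_apply (n j : ℕ) : e n j = if j = n then (1 : ℝ) else 0 := rfl

lemma norm_sum_smul_e_le (s : Finset ℕ) (ε : ℕ → ℝ) (hε : ∀ i, |ε i| ≤ 1) :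
    ‖∑ i ∈ s, ε i • e i‖ ≤ 1 := by
  refine c0_norm_le zero_le_one fun j => ?_
  have : (∑ i ∈ s, ε i • e i) j = ∑ i ∈ s, ε i * (if j = i then (1 : ℝ) else 0) := by
    rw [c0_sum_apply]
    exact Finset.sum_congr rfl fun i _ => by
      simp [ZeroAtInftyContinuousMap.coe_smul, e_apply, smul_eq_mul]
  rw [this]
  have h2 : ∑ i ∈ s, ε i * (if j = i then (1 : ℝ) else 0)
      = if j ∈ s then ε j else 0 := by
    rw [← Finset.sum_ite_eq s j ε]
    exact Finset.sum_congr rfl fun i _ => by by_cases h : j = i <;> simp [h]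
  rw [h2]
  split
  · exact hε j
  · simp

/-- The unit vector basis series in `c₀` is weakly unconditionally Cauchy. -/
lemma wuc_e : WUC e := by
  intro φ
  refine summable_of_sum_range_le (c := ‖φ‖) (fun n => abs_nonneg _) fun n => ?_
  set ε : ℕ → ℝ := fun i => if 0 ≤ φ (e i) then 1 else -1 with hε
  have hε1 : ∀ i, |ε i| ≤ 1 := fun i => by
    by_cases h : 0 ≤ φ (e i) <;> simp [hε, h]
  have key : ∑ i ∈ Finset.range n, |φ (e i)| = φ (∑ i ∈ Finset.range n, ε i • e i) := by
    rw [map_sum]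
    refine Finset.sum_congr rfl fun i _ => ?_
    by_cases h : 0 ≤ φ (e i)
    · simp [hε, h, abs_of_nonneg h]
    · push_neg at h
      simp [hε, not_le.mpr h, abs_of_neg h]
  rw [key]
  calc φ (∑ i ∈ Finset.range n, ε i • e i)
      ≤ ‖φ (∑ i ∈ Finset.range n, ε i • e i)‖ := le_abs_self _
    _ ≤ ‖φ‖ * ‖∑ i ∈ Finset.range n, ε i • e i‖ := φ.le_opNorm _
    _ ≤ ‖φ‖ * 1 := by
        exact mul_le_mul_of_nonneg_left (norm_sum_smul_e_le _ _ hε1) (norm_nonneg φ)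
    _ = ‖φ‖ := mul_one _

/-- Uniform bound on sign-sums of a w.u.C. series (Banach–Steinhaus). -/
lemma wuc_uniform_bound {X : Type*} [NormedAddCommGroup X] [NormedSpace ℝ X]
    {x : ℕ → X} (hx : WUC x) :
    ∃ M : ℝ, 0 ≤ M ∧ ∀ (F : Finset ℕ) (c : ℕ → ℝ), (∀ i, |c i| ≤ 1) →
      ‖∑ i ∈ F, c i • x i‖ ≤ M := by
  classical
  set ι := Finset ℕ × {c : ℕ → ℝ // ∀ i, |c i| ≤ 1}
  set g : ι → (X →L[ℝ] ℝ) →L[ℝ] ℝ :=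
    fun p => NormedSpace.inclusionInDoubleDualLi ℝ (E := X) (∑ i ∈ p.1, p.2.1 i • x i) with hg
  have hpt : ∀ φ : X →L[ℝ] ℝ, ∃ C, ∀ p : ι, ‖g p φ‖ ≤ C := by
    intro φ
    refine ⟨∑' n, |φ (x n)|, fun p => ?_⟩
    have h1 : g p φ = ∑ i ∈ p.1, p.2.1 i * φ (x i) := by
      simp [hg, NormedSpace.inclusionInDoubleDualLi, NormedSpace.dual_def, map_sum]
    rw [h1, Real.norm_eq_abs]
    calc |∑ i ∈ p.1, p.2.1 i * φ (x i)| ≤ ∑ i ∈ p.1, |p.2.1 i * φ (x i)| :=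
          Finset.abs_sum_le_sum_abs _ _
      _ ≤ ∑ i ∈ p.1, |φ (x i)| := by
          refine Finset.sum_le_sum fun i _ => ?_
          rw [abs_mul]
          exact mul_le_of_le_one_left (abs_nonneg _) (p.2.2 i)
      _ ≤ ∑' n, |φ (x n)| := Summable.sum_le_tsum _ (fun n _ => abs_nonneg _) (hx φ)
  obtain ⟨C, hC⟩ := banach_steinhaus hpt
  refine ⟨max C 0, le_max_right _ _, fun F c hc => ?_⟩
  have h := hC (F, ⟨c, hc⟩)
  have h2 : ‖g (F, ⟨c, hc⟩)‖ = ‖∑ i ∈ F, c i • x i‖ :=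
    (NormedSpace.inclusionInDoubleDualLi ℝ (E := X)).norm_map _
  rw [h2] at h
  exact h.trans (le_max_left _ _)

/-- Scaling the uniform bound. -/
lemma wuc_scaled_bound {X : Type*} [NormedAddCommGroup X] [NormedSpace ℝ X]
    {x : ℕ → X} {M : ℝ} (hM0 : 0 ≤ M)
    (hM : ∀ (F : Finset ℕ) (c : ℕ → ℝ), (∀ i, |c i| ≤ 1) → ‖∑ i ∈ F, c i • x i‖ ≤ M)
    (F : Finset ℕ) (c : ℕ → ℝ) (b : ℝ) (hb : 0 ≤ b) (hcb : ∀ i ∈ F, |c i| ≤ b) :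
    ‖∑ i ∈ F, c i • x i‖ ≤ M * b := by
  classical
  rcases eq_or_lt_of_le hb with h0 | h0
  · have hz : ∀ i ∈ F, c i • x i = 0 := fun i hi => by
      have : c i = 0 := abs_eq_zero.mp (le_antisymm (h0 ▸ hcb i hi) (abs_nonneg _))
      simp [this]
    rw [Finset.sum_eq_zero hz]
    simp [← h0]
  · set c' : ℕ → ℝ := fun i => if i ∈ F then c i / b else 0 with hc'
    have h1 : ∀ i, |c' i| ≤ 1 := by
      intro i
      by_cases hi : i ∈ F
      · simp only [hc', hi, if_true, abs_div, abs_of_pos h0]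
        rw [div_le_one h0]
        exact hcb i hi
      · simp [hc', hi]
    have h2 : ∑ i ∈ F, c i • x i = b • ∑ i ∈ F, c' i • x i := by
      rw [Finset.smul_sum]
      refine Finset.sum_congr rfl fun i hi => ?_
      rw [smul_smul]
      congr 1
      simp only [hc', hi, if_true]
      field_simp
    rw [h2, norm_smul, Real.norm_eq_abs, abs_of_pos h0, mul_comm]
    exact mul_le_mul_of_nonneg_right (hM F c' h1) hb

/-- If `P` is not unconditionally converging, there is an operator `T : c₀ → X` such that
`P ∘ T` is not unconditionally converging. -/
theorem exists_c0_operator_of_not_uc {X Y : Type*}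
    [NormedAddCommGroup X] [NormedSpace ℝ X] [CompleteSpace X]
    [NormedAddCommGroup Y] [NormedSpace ℝ Y] [CompleteSpace Y]
    (k : ℕ) (hk : 1 ≤ k) (A : ContinuousMultilinearMap ℝ (fun _ : Fin k => X) Y)
    (P : X → Y) (hP : P = fun x => A fun _ => x)
    (huc : ¬ UCPoly P) :
    ∃ T : c0 →L[ℝ] X, ¬ UCPoly (fun z => P (T z)) := by
  classical
  -- Extract a w.u.C. series witnessing the failure of unconditional convergence.
  rw [UCPoly] at huc
  push_neg at huc
  obtain ⟨x, hxwuc, hnot⟩ := huc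
  -- Uniform bound on sign-sums.
  obtain ⟨M, hM0, hM⟩ := wuc_uniform_bound hxwuc
  -- For every `a ∈ c₀`, the series `∑ aₙ • xₙ` converges.
  have hsum : ∀ a : c0, Summable fun n => a n • x n := by
    intro a
    rw [summable_iff_vanishing_norm]
    intro ε hε
    have hδ : 0 < ε / (M + 1) := div_pos hε (by linarith)
    have hcof : ∀ᶠ i in Filter.cofinite, |a i| < ε / (M + 1) := by
      have h0 : Tendsto (⇑a) Filter.cofinite (𝓝 0) := by
        have := zero_at_infty (F := c0) a
        rwa [Filter.cocompact_eq_cofinite] at this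
      have := h0.eventually (eventually_abs_sub_lt 0 hδ)
      simpa using this
    rw [Filter.eventually_cofinite] at hcof
    refine ⟨hcof.toFinset, fun t ht => ?_⟩
    have hbd : ∀ i ∈ t, |a i| ≤ ε / (M + 1) := by
      intro i hi
      have : i ∉ hcof.toFinset := fun h => (Finset.disjoint_left.mp ht hi) h
      rw [Set.Finite.mem_toFinset] at this
      exact (not_not.mp this).le
    calc ‖∑ i ∈ t, a i • x i‖ ≤ M * (ε / (M + 1)) :=
          wuc_scaled_bound hM0 hM t _ _ hδ.le hbd
      _ < ε := by
          rw [mul_div_assoc'] at *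
          rw [div_lt_iff₀ (by linarith : (0:ℝ) < M + 1)]
          nlinarith
  -- Define the operator `T : c₀ → X`.
  set Tlin : c0 →ₗ[ℝ] X :=
    { toFun := fun a => ∑' n, a n • x n
      map_add' := fun a b => by
        have : (fun n => (a + b) n • x n) = fun n => a n • x n + b n • x n := by
          funext n
          rw [ZeroAtInftyContinuousMap.coe_add, Pi.add_apply, add_smul]
        rw [this, Summable.tsum_add (hsum a) (hsum b)]
      map_smul' := fun r a => by
        have : (fun n => (r • a) n • x n) = fun n => r • (a n • x n) := by
          funext n
          rw [ZeroAtInftyContinuousMap.coe_smul, Pi.smul_apply, smul_smul, smul_eq_mul]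
        simp only [RingHom.id_apply]
        rw [this, Summable.tsum_const_smul r (hsum a)] } with hTlin
  have hTbound : ∀ a : c0, ‖Tlin a‖ ≤ M * ‖a‖ := by
    intro a
    have h := (hsum a).hasSum
    refine le_of_tendsto' h.norm (fun s => ?_)
    exact wuc_scaled_bound hM0 hM s _ _ (norm_nonneg a) fun i _ => c0_coe_abs_le_norm a i
  set T : c0 →L[ℝ] X := Tlin.mkContinuous M hTbound with hT
  have hTe : ∀ n, T (e n) = x n := by
    intro n
    show ∑' m, (e n) m • x m = x n
    rw [tsum_eq_single n (fun m hm => by simp [e_apply, hm])]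
    simp [e_apply]
  refine ⟨T, ?_⟩
  intro hUC
  obtain ⟨L, hL⟩ := hUC e wuc_e
  refine hnot L ?_
  have heq : ∀ n, T (∑ i ∈ Finset.range n, e i) = ∑ i ∈ Finset.range n, x i := by
    intro n
    rw [map_sum]
    exact Finset.sum_congr rfl fun i _ => hTe i
  simpa only [heq] using hL
end
end

section
/- Let k ≥ 1 be an integer. If a sequence (xₙ) in c₀ is equivalent to the c₀-basis, then the sequence of diagonal tensors (xₙ^{⊗k}) in the k-fold algebraic tensor product ⊗^k c₀ is equivalent to the c₀-basis with respect to the projective seminorm: there exist constants 0 < c ≤ C such that c·maxᵢ|aᵢ| ≤ π(∑_{i=1}^n aᵢ · x_i^{⊗k}) ≤ C·maxᵢ|aᵢ| for all n and all scalars a₁,…,aₙ. -/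
/-!
Lower bound: a sequence with `c · max |bᵢ| ≤ ‖∑ bᵢ xᵢ‖` has biorthogonal functionals `gᵢ` with
`‖gᵢ‖ ≤ c⁻¹` (Hahn–Banach on its span), and the `k`-linear form `gᵢ(·)⋯gᵢ(·)`, of norm at most
`c⁻ᵏ`, extracts `aᵢ` from `∑ aⱼ xⱼ^{⊗k}`.

Upper bound: averaging over independent sign vectors `ε¹, …, εᵏ⁻¹ ∈ {±1}ⁿ` kills every
off-diagonal term, so
`∑ aᵢ xᵢ^{⊗k} = 𝔼 (∑ aᵢ ε¹ᵢ⋯εᵏ⁻¹ᵢ xᵢ) ⊗ (∑ ε¹ᵢ xᵢ) ⊗ ⋯ ⊗ (∑ εᵏ⁻¹ᵢ xᵢ)`,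
and each elementary tensor on the right has projective norm at most `C · max |aᵢ| · Cᵏ⁻¹`.
-/

open Filter Topology Metric

noncomputable section

open scoped TensorProduct

open PiTensorProduct

section Rademacher

variable {R : Type*} [CommRing R] {ι : Type*} [Fintype ι] [DecidableEq ι]

theorem sum_sign_mul_sign (i j : ι) :
    ∑ τ : ι → ℤˣ, ((τ i : ℤ) : R) * (τ j : ℤ) = if i = j then 2 ^ Fintype.card ι else 0 := by
  split_ifs with hij
  · subst hij
    simp [← Int.cast_mul, ← Units.val_mul, Fintype.card_units_int]
  · -- flipping the sign at `i` pairs off the terms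
    refine Finset.sum_ninvolution (fun τ => Function.update τ i (-τ i)) (fun τ => ?_)
      (fun τ _ h => ?_) (fun _ => Finset.mem_univ _) (fun τ => ?_)
    · simp [Function.update_of_ne (Ne.symm hij)]
    · simpa using congrFun h i
    · ext1 l
      by_cases hl : l = i
      · subst hl; simp
      · simp [Function.update_of_ne hl]

variable {m : ℕ}

theorem sum_prod_sign_mul_sign (r : Fin (m + 1) → ι) :
    ∑ σ : Fin m → ι → ℤˣ, ∏ l, ((σ l (r 0) : ℤ) : R) * (σ l (r l.succ) : ℤ) =
      if ∀ j, r j = r 0 then 2 ^ (Fintype.card ι * m) else 0 := by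
  rw [← Fintype.prod_sum fun (l : Fin m) (τ : ι → ℤˣ) => ((τ (r 0) : ℤ) : R) * (τ (r l.succ) : ℤ)]
  simp only [sum_sign_mul_sign]
  split_ifs with h
  · rw [Finset.prod_congr rfl fun l _ => if_pos (h (Fin.succ l)).symm, Finset.prod_const,
      Finset.card_univ, Fintype.card_fin, pow_mul]
  · obtain ⟨j, hj⟩ := not_forall.mp h
    obtain ⟨l, rfl⟩ := Fin.exists_succ_eq_of_ne_zero (fun h0 : j = 0 => hj (h0 ▸ rfl))
    exact Finset.prod_eq_zero (Finset.mem_univ l) (if_neg (Ne.symm hj))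

def signedCoeff (a : ι → R) (σ : Fin m → ι → ℤˣ) : Fin (m + 1) → ι → R :=
  Fin.cons (fun i => a i * ∏ l, ((σ l i : ℤ) : R)) (fun l i => ((σ l i : ℤ) : R))

theorem sum_prod_signedCoeff (a : ι → R) (r : Fin (m + 1) → ι) :
    ∑ σ, ∏ j, signedCoeff a σ j (r j) =
      if ∀ j, r j = r 0 then 2 ^ (Fintype.card ι * m) * a (r 0) else 0 := by
  have h : ∀ σ : Fin m → ι → ℤˣ, ∏ j, signedCoeff a σ j (r j) =
      a (r 0) * ∏ l, ((σ l (r 0) : ℤ) : R) * (σ l (r l.succ) : ℤ) := fun σ => by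
    simp [signedCoeff, Fin.prod_univ_succ, Finset.prod_mul_distrib, mul_assoc]
  rw [Finset.sum_congr rfl fun σ _ => h σ, ← Finset.mul_sum, sum_prod_sign_mul_sign, mul_ite,
    mul_zero, mul_comm]

theorem sum_ite_forall_eq_apply_zero {M : Type*} [AddCommMonoid M] (f : (Fin (m + 1) → ι) → M) :
    ∑ r, (if ∀ j, r j = r 0 then f r else 0) = ∑ i, f (fun _ => i) := by
  rw [← Finset.sum_filter]
  have : Finset.univ.filter (fun r : Fin (m + 1) → ι => ∀ j, r j = r 0) =
      Finset.univ.map ⟨fun i _ => i, fun i i' h => congrFun h 0⟩ := by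
    ext r
    simp only [Finset.mem_filter, Finset.mem_univ, true_and, Finset.mem_map]
    exact ⟨fun h => ⟨r 0, funext fun j => (h j).symm⟩, by rintro ⟨i, rfl⟩ j; rfl⟩
  rw [this, Finset.sum_map]
  rfl

theorem sum_tprod_signedCoeff {M : Type*} [AddCommGroup M] [Module R M] (a : ι → R) (y : ι → M) :
    ∑ σ, tprod R (fun j => ∑ i, signedCoeff a σ j i • y i) =
      (2 ^ (Fintype.card ι * m) : R) • ∑ i, a i • tprod R (fun _ : Fin (m + 1) => y i) := by
  simp only [MultilinearMap.map_sum, MultilinearMap.map_smul_univ]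
  rw [Finset.sum_comm]
  simp only [← Finset.sum_smul, sum_prod_signedCoeff, ite_smul, zero_smul]
  rw [sum_ite_forall_eq_apply_zero, Finset.smul_sum]
  simp [smul_smul]

end Rademacher

section Normed

variable {𝕜 : Type*} [RCLike 𝕜] {E : Type*} [SeminormedAddCommGroup E] [NormedSpace 𝕜 E]

theorem LinearMap.exists_dual_comp_eq_of_bounded_below {F : Type*} [NormedAddCommGroup F]
    [NormedSpace 𝕜 F] (T : F →ₗ[𝕜] E) {c : ℝ} (hc : 0 < c) (hT : ∀ x, c * ‖x‖ ≤ ‖T x‖)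
    (φ : StrongDual 𝕜 F) : ∃ g : StrongDual 𝕜 E, (∀ x, g (T x) = φ x) ∧ ‖g‖ ≤ ‖φ‖ / c := by
  have hinj : Function.Injective T := by
    refine (injective_iff_map_eq_zero T).2 fun x hx => norm_le_zero_iff.1 ?_
    have := hT x
    rw [hx, norm_zero] at this
    nlinarith [norm_nonneg x]
  let e := LinearEquiv.ofInjective T hinj
  have he : ∀ w, ‖e.symm w‖ ≤ ‖w‖ / c := fun w => by
    rw [le_div_iff₀ hc, mul_comm]
    simpa [e] using hT (e.symm w)
  let f : StrongDual 𝕜 (LinearMap.range T) :=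
    ((φ : F →ₗ[𝕜] 𝕜) ∘ₗ e.symm.toLinearMap).mkContinuous (‖φ‖ / c) fun w =>
      calc ‖φ (e.symm w)‖ ≤ ‖φ‖ * (‖w‖ / c) := φ.le_of_opNorm_le le_rfl _ |>.trans
            (mul_le_mul_of_nonneg_left (he w) (norm_nonneg φ))
        _ = ‖φ‖ / c * ‖w‖ := by ring
  obtain ⟨g, hgf, hg⟩ := exists_extension_norm_eq _ f
  refine ⟨g, fun x => ?_, hg ▸ LinearMap.mkContinuous_norm_le _ (by positivity) _⟩
  have : (⟨T x, LinearMap.mem_range_self T x⟩ : LinearMap.range T) = e x := rfl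
  simp [hgf ⟨T x, _⟩, f, this]

theorem norm_intCast_units (u : ℤˣ) : ‖((u : ℤ) : 𝕜)‖ = 1 := by
  rcases Int.units_eq_one_or u with rfl | rfl <;> simp

variable {ι : Type*} [Fintype ι]

theorem norm_signedCoeff_zero_le {m : ℕ} (a : ι → 𝕜) (σ : Fin m → ι → ℤˣ) :
    ‖signedCoeff a σ 0‖ ≤ ‖a‖ :=
  (pi_norm_le_iff_of_nonneg (norm_nonneg a)).2 fun i => by
    simpa [signedCoeff, norm_intCast_units] using norm_le_pi_norm a i

theorem norm_signedCoeff_succ_le {m : ℕ} (a : ι → 𝕜) (σ : Fin m → ι → ℤˣ) (l : Fin m) :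
    ‖signedCoeff a σ l.succ‖ ≤ 1 :=
  (pi_norm_le_iff_of_nonneg zero_le_one).2 fun i => by simp [signedCoeff, norm_intCast_units]

theorem norm_sum_mul_pow_le (g : StrongDual 𝕜 E) (a : ι → 𝕜) (y : ι → E) (k : ℕ) :
    ‖∑ i, a i * g (y i) ^ k‖ ≤ ‖g‖ ^ k * ‖∑ i, a i • tprod 𝕜 (fun _ : Fin k => y i)‖ := by
  let G := (ContinuousMultilinearMap.mkPiAlgebra 𝕜 (Fin k) 𝕜).compContinuousLinearMap fun _ => g
  have hG : ‖G‖ ≤ ‖g‖ ^ k := by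
    simpa using ContinuousMultilinearMap.norm_compContinuousLinearMap_le
      (ContinuousMultilinearMap.mkPiAlgebra 𝕜 (Fin k) 𝕜) fun _ => g
  have hGz : lift G.toMultilinearMap (∑ i, a i • tprod 𝕜 fun _ : Fin k => y i) =
      ∑ i, a i * g (y i) ^ k := by
    simp [G]
  rw [← hGz]
  exact (norm_eval_le_projectiveSeminorm G _).trans (by gcongr)

variable [DecidableEq ι]

theorem exists_dual_apply_eq_single {y : ι → E} {c : ℝ} (hc : 0 < c)
    (hy : ∀ b : ι → 𝕜, c * ‖b‖ ≤ ‖∑ i, b i • y i‖) (i : ι) :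
    ∃ g : StrongDual 𝕜 E, (∀ j, g (y j) = (Pi.single i 1 : ι → 𝕜) j) ∧ ‖g‖ ≤ c⁻¹ := by
  obtain ⟨g, hg, hgnorm⟩ := (Fintype.linearCombination 𝕜 y).exists_dual_comp_eq_of_bounded_below
    hc (by simpa [Fintype.linearCombination_apply] using hy) (ContinuousLinearMap.proj i)
  refine ⟨g, fun j => ?_, hgnorm.trans ?_⟩
  · simpa [Pi.single_comm] using hg (Pi.single j 1)
  · rw [div_le_iff₀ hc, inv_mul_cancel₀ hc.ne']
    exact ContinuousLinearMap.opNorm_le_bound _ zero_le_one fun b => by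
      simpa using norm_le_pi_norm b i

theorem mul_norm_le_norm_sum_smul_tprod {y : ι → E} {c : ℝ} (hc : 0 < c)
    (hy : ∀ b : ι → 𝕜, c * ‖b‖ ≤ ‖∑ i, b i • y i‖) {k : ℕ} (hk : k ≠ 0) (a : ι → 𝕜) :
    c ^ k * ‖a‖ ≤ ‖∑ i, a i • tprod 𝕜 (fun _ : Fin k => y i)‖ := by
  rw [← le_inv_mul_iff₀ (pow_pos hc k)]
  refine (pi_norm_le_iff_of_nonneg (by positivity)).2 fun i => ?_
  obtain ⟨g, hgy, hg⟩ := exists_dual_apply_eq_single hc hy i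
  calc ‖a i‖ = ‖∑ j, a j * g (y j) ^ k‖ := by simp [hgy, Pi.single_apply, hk]
    _ ≤ ‖g‖ ^ k * ‖∑ j, a j • tprod 𝕜 (fun _ : Fin k => y j)‖ := norm_sum_mul_pow_le g a y k
    _ ≤ (c ^ k)⁻¹ * ‖∑ j, a j • tprod 𝕜 (fun _ : Fin k => y j)‖ := by
      rw [← inv_pow]
      gcongr

theorem norm_sum_smul_tprod_le {y : ι → E} {C : ℝ} (hC : 0 ≤ C)
    (hy : ∀ b : ι → 𝕜, ‖∑ i, b i • y i‖ ≤ C * ‖b‖) {k : ℕ} (hk : k ≠ 0) (a : ι → 𝕜) :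
    ‖∑ i, a i • tprod 𝕜 (fun _ : Fin k => y i)‖ ≤ C ^ k * ‖a‖ := by
  obtain ⟨m, rfl⟩ := Nat.exists_eq_succ_of_ne_zero hk
  set N := Fintype.card ι * m
  have hN : (Fintype.card (Fin m → ι → ℤˣ) : ℝ) = 2 ^ N := by
    simp [N, pow_mul]
  have hterm : ∀ σ : Fin m → ι → ℤˣ,
      ‖tprod 𝕜 fun j => ∑ i, signedCoeff a σ j i • y i‖ ≤ C ^ (m + 1) * ‖a‖ := fun σ =>
    calc _ ≤ ∏ j, ‖∑ i, signedCoeff a σ j i • y i‖ := projectiveSeminorm_tprod_le _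
      _ ≤ C * ‖a‖ * ∏ l : Fin m, C := by
        rw [Fin.prod_univ_succ]
        gcongr with l
        · exact (hy _).trans (by gcongr; exact norm_signedCoeff_zero_le a σ)
        · exact (hy _).trans (mul_le_of_le_one_right hC (norm_signedCoeff_succ_le a σ l))
      _ = C ^ (m + 1) * ‖a‖ := by
        rw [Finset.prod_const, Finset.card_univ, Fintype.card_fin]
        ring
  calc ‖∑ i, a i • tprod 𝕜 (fun _ : Fin (m + 1) => y i)‖
      = ‖((2 : 𝕜) ^ N)⁻¹ • ∑ σ, tprod 𝕜 fun j => ∑ i, signedCoeff a σ j i • y i‖ := by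
        rw [sum_tprod_signedCoeff, inv_smul_smul₀ (pow_ne_zero _ two_ne_zero)]
    _ ≤ (2 ^ N)⁻¹ * ∑ σ : Fin m → ι → ℤˣ, C ^ (m + 1) * ‖a‖ := by
        grw [norm_smul, norm_sum_le, Finset.sum_le_sum fun σ _ => hterm σ]
        simp
    _ = C ^ (m + 1) * ‖a‖ := by
        rw [Finset.sum_const, Finset.card_univ, nsmul_eq_mul, hN]
        field_simp

end Normed

theorem iSup_abs_eq_norm (a : ℕ → ℝ) (n : ℕ) : ⨆ i : Fin n, |a i| = ‖fun i : Fin n => a i‖ :=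
  le_antisymm (Real.iSup_le (fun i => norm_le_pi_norm (fun i : Fin n => a i) i) (norm_nonneg _))
    ((pi_norm_le_iff_of_nonneg (Real.iSup_nonneg fun _ => abs_nonneg _)).2 fun i =>
      le_ciSup (f := fun i : Fin n => |a i|) (Set.finite_range _).bddAbove i)

theorem IsEquivC0Basis.exists_bounds_fin {X : Type*} [NormedAddCommGroup X] [NormedSpace ℝ X]
    {x : ℕ → X} (hx : IsEquivC0Basis x) :
    ∃ c C : ℝ, 0 < c ∧ c ≤ C ∧ ∀ (n : ℕ) (b : Fin n → ℝ),
      c * ‖b‖ ≤ ‖∑ i, b i • x i‖ ∧ ‖∑ i, b i • x i‖ ≤ C * ‖b‖ := by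
  obtain ⟨c, C, hc, hcC, hbounds⟩ := hx
  refine ⟨c, C, hc, hcC, fun n b => ?_⟩
  let a : ℕ → ℝ := fun j => if h : j < n then b ⟨j, h⟩ else 0
  have hab : (fun i : Fin n => a i) = b := funext fun i => dif_pos i.isLt
  have hsum : ∑ j ∈ Finset.range n, a j • x j = ∑ i : Fin n, b i • x i := by
    rw [← Fin.sum_univ_eq_sum_range (fun j => a j • x j), ← hab]
  simpa only [hsum, iSup_abs_eq_norm, hab] using hbounds n a

open PiTensorProduct in
/-- The diagonal polynomial `γₖ : c₀ → ⊗^k c₀` takes sequences equivalent to the `c₀`-basis to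
sequences equivalent to the `c₀`-basis for the projective seminorm. -/
theorem diagonal_tensor_equiv_c0_basis_on_c0
    (k : ℕ) (hk : 1 ≤ k) (x : ℕ → c0) (hx : IsEquivC0Basis x) :
    ∃ c C : ℝ, 0 < c ∧ c ≤ C ∧ ∀ (n : ℕ) (a : ℕ → ℝ),
      c * (⨆ i : Fin n, |a i|) ≤
        projectiveSeminorm (∑ i ∈ Finset.range n, a i • tprod ℝ (fun _ : Fin k => x i)) ∧
      projectiveSeminorm (∑ i ∈ Finset.range n, a i • tprod ℝ (fun _ : Fin k => x i)) ≤
        C * (⨆ i : Fin n, |a i|) := by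
  obtain ⟨c, C, hc, hcC, hbounds⟩ := hx.exists_bounds_fin
  refine ⟨c ^ k, C ^ k, pow_pos hc k, pow_le_pow_left₀ hc.le hcC k, fun n a => ?_⟩
  have hk0 : k ≠ 0 := Nat.one_le_iff_ne_zero.mp hk
  rw [iSup_abs_eq_norm, ← Fin.sum_univ_eq_sum_range (fun i => a i • tprod ℝ fun _ : Fin k => x i)]
  exact ⟨mul_norm_le_norm_sum_smul_tprod hc (fun b => (hbounds n b).1) hk0 _,
    norm_sum_smul_tprod_le (hc.le.trans hcC) (fun b => (hbounds n b).2) hk0 _⟩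
end
end

section
/- Let X be a real Banach space, k ≥ 1 an integer, and j : c₀ → X a bounded linear operator which is an isomorphic embedding, i.e., there is c > 0 with ‖j(x)‖ ≥ c‖x‖ for all x ∈ c₀. Then the induced linear map j^{(k)} = j ⊗ ⋯ ⊗ j : ⊗^k c₀ → ⊗^k X between the k-fold algebraic tensor products is an isomorphic embedding for the projective seminorms: there exist constants 0 < c' ≤ C' such that c'·π(z) ≤ π(j^{(k)}(z)) ≤ C'·π(z) for every z ∈ ⊗^k c₀. -/
/-!
The upper bound is the estimate `‖mapL f‖ ≤ ∏ ‖f i‖` for the projective norm. For the lower bound,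
Hahn–Banach extends the coordinate functionals of `c₀` through `j` with norm at most `c⁻¹`; these
assemble into operators `v_N : X → c₀` of norm at most `c⁻¹` such that `v_N ∘ j` is the `N`-th
partial-sum projection of `c₀`. Hence `v_N^{(k)} ∘ j^{(k)}` tends pointwise to the identity of
`⊗^k c₀`, and `π(z) = lim π(v_N^{(k)} (j^{(k)} z)) ≤ c^{-k} π(j^{(k)} z)`.
-/

open Filter Topology Metric

noncomputable section

open scoped TensorProduct

namespace ContinuousLinearMap

variable {𝕜 E F : Type*} [RCLike 𝕜] [NormedAddCommGroup E] [NormedSpace 𝕜 E]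
  [NormedAddCommGroup F] [NormedSpace 𝕜 F]

theorem exists_comp_eq_of_le_norm_apply (j : E →L[𝕜] F) {c : ℝ} (hc : 0 < c)
    (hj : ∀ x, c * ‖x‖ ≤ ‖j x‖) (f : StrongDual 𝕜 E) :
    ∃ φ : StrongDual 𝕜 F, φ ∘L j = f ∧ ‖φ‖ ≤ c⁻¹ * ‖f‖ := by
  have hinj : Function.Injective j := by
    refine (injective_iff_map_eq_zero j).2 fun x hx => norm_le_zero_iff.1 ?_
    have := hj x
    rw [hx, norm_zero] at this
    exact nonpos_of_mul_nonpos_right this hc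
  let e := LinearEquiv.ofInjective (j : E →ₗ[𝕜] F) hinj
  let g : StrongDual 𝕜 (LinearMap.range (j : E →ₗ[𝕜] F)) :=
    ((f : E →ₗ[𝕜] 𝕜) ∘ₗ (e.symm : _ →ₗ[𝕜] E)).mkContinuous (c⁻¹ * ‖f‖) fun y => by
      have hy : c * ‖e.symm y‖ ≤ ‖y‖ := by
        have := hj (e.symm y)
        rwa [← coe_coe, LinearEquiv.ofInjective_symm_apply] at this
      calc ‖f (e.symm y)‖ ≤ ‖f‖ * ‖e.symm y‖ := f.le_opNorm _
        _ ≤ ‖f‖ * (c⁻¹ * ‖y‖) := by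
          gcongr
          rwa [le_inv_mul_iff₀ hc]
        _ = c⁻¹ * ‖f‖ * ‖y‖ := by ring
  obtain ⟨φ, hφg, hφ⟩ := exists_extension_norm_eq _ g
  refine ⟨φ, ext fun x => ?_, hφ ▸ LinearMap.mkContinuous_norm_le _ (by positivity) _⟩
  simpa [g, e] using hφg (e x)

end ContinuousLinearMap

namespace c0

theorem abs_apply_le_norm (x : c0) (i : ℕ) : |x i| ≤ ‖x‖ :=
  x.toBCF.norm_coe_le_norm i

theorem norm_le_of_forall_abs_le {x : c0} {M : ℝ} (hM : 0 ≤ M) (h : ∀ i, |x i| ≤ M) :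
    ‖x‖ ≤ M :=
  (BoundedContinuousFunction.norm_le hM).2 h

def coord (i : ℕ) : StrongDual ℝ c0 :=
  LinearMap.mkContinuous
    { toFun := fun x => x i
      map_add' := fun _ _ => rfl
      map_smul' := fun _ _ => rfl } 1
    fun x => by simpa using abs_apply_le_norm x i

@[simp]
theorem coord_apply (i : ℕ) (x : c0) : coord i x = x i := rfl

theorem norm_coord_le (i : ℕ) : ‖coord i‖ ≤ 1 :=
  LinearMap.mkContinuous_norm_le _ zero_le_one _

theorem sum_smul_e_apply (a : ℕ → ℝ) (N m : ℕ) :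
    (∑ i ∈ Finset.range N, a i • e i) m = if m < N then a m else 0 := by
  rw [← coord_apply, map_sum]
  simp [e, Finset.mem_range]

theorem norm_sum_smul_e_le {a : ℕ → ℝ} {N : ℕ} {M : ℝ} (hM : 0 ≤ M)
    (h : ∀ i < N, |a i| ≤ M) : ‖∑ i ∈ Finset.range N, a i • e i‖ ≤ M := by
  refine norm_le_of_forall_abs_le hM fun m => ?_
  rw [sum_smul_e_apply]
  split_ifs with hm
  · exact h m hm
  · simpa using hM

theorem tendsto_sum_smul_e (x : c0) :
    Tendsto (fun N => ∑ i ∈ Finset.range N, x i • e i) atTop (𝓝 x) := by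
  have hx : Tendsto x atTop (𝓝 0) := by
    simpa [Filter.cocompact_eq_cofinite, Nat.cofinite_eq_atTop] using x.zero_at_infty'
  refine Metric.tendsto_atTop.2 fun ε hε => ?_
  obtain ⟨N₀, hN₀⟩ := Metric.tendsto_atTop.1 hx (ε / 2) (half_pos hε)
  refine ⟨N₀, fun N hN => ?_⟩
  rw [dist_eq_norm]
  refine (norm_le_of_forall_abs_le (half_pos hε).le fun m => ?_).trans_lt (half_lt_self hε)
  rw [← coord_apply, map_sub, coord_apply, sum_smul_e_apply]
  split_ifs with hm
  · simpa using (half_pos hε).le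
  · simpa [Real.dist_eq] using (hN₀ m (hN.trans (not_lt.1 hm))).le

theorem exists_approx_leftInverse {X : Type*} [NormedAddCommGroup X] [NormedSpace ℝ X]
    (j : c0 →L[ℝ] X) {c : ℝ} (hc : 0 < c) (hj : ∀ x, c * ‖x‖ ≤ ‖j x‖) :
    ∃ v : ℕ → X →L[ℝ] c0, (∀ N, ‖v N‖ ≤ c⁻¹) ∧
      ∀ x, Tendsto (fun N => v N (j x)) atTop (𝓝 x) := by
  choose φ hφj hφ using fun i => j.exists_comp_eq_of_le_norm_apply hc hj (coord i)
  have hφ_apply : ∀ i y, |φ i y| ≤ c⁻¹ * ‖y‖ := fun i y =>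
    calc |φ i y| ≤ ‖φ i‖ * ‖y‖ := (φ i).le_opNorm y
      _ ≤ c⁻¹ * ‖y‖ := by
        gcongr
        exact (hφ i).trans (mul_le_of_le_one_right (by positivity) (norm_coord_le i))
  refine ⟨fun N => ∑ i ∈ Finset.range N, (φ i).smulRight (e i), fun N => ?_, fun x => ?_⟩
  · refine ContinuousLinearMap.opNorm_le_bound _ (by positivity) fun y => ?_
    simpa using norm_sum_smul_e_le (by positivity) fun i _ => hφ_apply i y
  · have hφj_apply : ∀ i, φ i (j x) = x i := fun i => by simpa using congr($(hφj i) x)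
    simpa [hφj_apply] using tendsto_sum_smul_e x

end c0

namespace PiTensorProduct

variable {𝕜 ι α : Type*} [NontriviallyNormedField 𝕜] [Fintype ι]
  {E F : ι → Type*} [∀ i, SeminormedAddCommGroup (E i)] [∀ i, NormedSpace 𝕜 (E i)]
  [∀ i, SeminormedAddCommGroup (F i)] [∀ i, NormedSpace 𝕜 (F i)]

theorem tendsto_mapL_apply {l : Filter α} {f : α → Π i, E i →L[𝕜] F i}
    {g : Π i, E i →L[𝕜] F i} (h : ∀ i x, Tendsto (fun a => f a i x) l (𝓝 (g i x)))
    (z : ⨂[𝕜] i, E i) : Tendsto (fun a => mapL (f a) z) l (𝓝 (mapL g z)) := by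
  induction z using PiTensorProduct.induction_on with
  | smul_tprod r x =>
    have htprod : Continuous (tprod 𝕜 : (Π i, F i) → ⨂[𝕜] i, F i) := by
      simpa using (tprodL 𝕜 (E := F)).cont
    simp only [map_smul, mapL_apply, map_tprod, ContinuousLinearMap.coe_coe]
    exact ((htprod.tendsto _).comp (tendsto_pi_nhds.2 fun i => h i (x i))).const_smul r
  | add z w hz hw => simpa only [map_add] using hz.add hw

theorem norm_le_prod_mul_norm_mapL {l : Filter α} [l.NeBot] (j : Π i, E i →L[𝕜] F i)
    (v : α → Π i, F i →L[𝕜] E i) {C : ι → ℝ} (hv : ∀ a i, ‖v a i‖ ≤ C i)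
    (hvj : ∀ i x, Tendsto (fun a => v a i (j i x)) l (𝓝 x)) (z : ⨂[𝕜] i, E i) :
    ‖z‖ ≤ (∏ i, C i) * ‖mapL j z‖ := by
  have hz : Tendsto (fun a => mapL (fun i => v a i ∘L j i) z) l
      (𝓝 (mapL (fun i => ContinuousLinearMap.id 𝕜 (E i)) z)) :=
    tendsto_mapL_apply hvj z
  rw [mapL_id] at hz
  refine le_of_tendsto' hz.norm fun a => ?_
  rw [mapL_comp, ContinuousLinearMap.comp_apply]
  calc ‖mapL (v a) (mapL j z)‖ ≤ ‖mapL (v a)‖ * ‖mapL j z‖ := ContinuousLinearMap.le_opNorm _ _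
    _ ≤ (∏ i, C i) * ‖mapL j z‖ := by
      gcongr
      exact (opNorm_mapL _).trans
        (Finset.prod_le_prod (fun i _ => norm_nonneg _) fun i _ => hv a i)

end PiTensorProduct

open PiTensorProduct in
theorem tensor_power_embedding_general {X : Type*}
    [NormedAddCommGroup X] [NormedSpace ℝ X]
    (k : ℕ) (j : c0 →L[ℝ] X) (c : ℝ) (hc : 0 < c)
    (hj : ∀ z : c0, c * ‖z‖ ≤ ‖j z‖) :
    ∃ c' C' : ℝ, 0 < c' ∧ c' ≤ C' ∧ ∀ z : ⨂[ℝ] (_ : Fin k), c0,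
      c' * projectiveSeminorm z ≤
        projectiveSeminorm (PiTensorProduct.map (fun _ : Fin k => (j : c0 →ₗ[ℝ] X)) z) ∧
      projectiveSeminorm (PiTensorProduct.map (fun _ : Fin k => (j : c0 →ₗ[ℝ] X)) z) ≤
        C' * projectiveSeminorm z := by
  obtain ⟨v, hv, hvj⟩ := c0.exists_approx_leftInverse j hc hj
  refine ⟨c ^ k, max (c ^ k) (‖j‖ ^ k), by positivity, le_max_left _ _, fun z => ?_⟩
  change c ^ k * ‖z‖ ≤ ‖map (fun _ : Fin k => (j : c0 →ₗ[ℝ] X)) z‖ ∧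
    ‖map (fun _ : Fin k => (j : c0 →ₗ[ℝ] X)) z‖ ≤ _ * ‖z‖
  rw [← mapL_apply]
  constructor
  · have hlower := norm_le_prod_mul_norm_mapL (l := atTop) (fun _ : Fin k => j)
      (fun N _ => v N) (C := fun _ => c⁻¹) (fun N _ => hv N) (fun _ => hvj) z
    rw [Finset.prod_const, Finset.card_fin, inv_pow] at hlower
    rwa [← le_inv_mul_iff₀ (by positivity)]
  · calc ‖mapL (fun _ : Fin k => j) z‖ ≤ ‖mapL (fun _ : Fin k => j)‖ * ‖z‖ :=
          (mapL (fun _ : Fin k => j)).le_opNorm z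
      _ ≤ ‖j‖ ^ k * ‖z‖ := by
        gcongr
        simpa using opNorm_mapL (fun _ : Fin k => j)
      _ ≤ max (c ^ k) (‖j‖ ^ k) * ‖z‖ := by gcongr; exact le_max_right _ _

open PiTensorProduct in
/-- If `j : c₀ → X` is an isomorphic embedding, then `j ⊗ ⋯ ⊗ j : ⊗^k c₀ → ⊗^k X` is an
isomorphic embedding for the projective seminorms. -/
theorem tensor_power_embedding {X : Type*}
    [NormedAddCommGroup X] [NormedSpace ℝ X] [CompleteSpace X]
    (k : ℕ) (hk : 1 ≤ k) (j : c0 →L[ℝ] X) (c : ℝ) (hc : 0 < c)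
    (hj : ∀ z : c0, c * ‖z‖ ≤ ‖j z‖) :
    ∃ c' C' : ℝ, 0 < c' ∧ c' ≤ C' ∧ ∀ z : ⨂[ℝ] (_ : Fin k), c0,
      c' * projectiveSeminorm z ≤
        projectiveSeminorm (PiTensorProduct.map (fun _ : Fin k => (j : c0 →ₗ[ℝ] X)) z) ∧
      projectiveSeminorm (PiTensorProduct.map (fun _ : Fin k => (j : c0 →ₗ[ℝ] X)) z) ≤
        C' * projectiveSeminorm z :=
  tensor_power_embedding_general k j c hc hj
end
end
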